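/- Let A be the commutative Banach algebra ℓ¹(S) of summable functions on the semigroup S = {n ∈ ℤ^∞ : τ(n) ≥ 0} with convolution product. Every multiplicative linear functional on A is of the form f ↦ ∑_{n∈S} f(n)·z^n, where z^n = ∏_k (p_k^{−σ} λ_k)^{n_k} for some σ ∈ [0, ∞] and λ ∈ 𝕋^ω (with z^n = 0 for n ≠ 0 when σ = ∞), and conversely each such formula defines a multiplicative functional. -/

import Mathlib

/-!
A character `φ` of `ℓ¹(S)` is determined by `c(n) = φ(δₙ)`: finitely supported functions are dense
and `φ` is bounded by the `ℓ¹` norm. The function `c` is multiplicative and bounded by `1` on `S`,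
and since `n - m ∈ S` whenever `τ(m) ≤ τ(n)`, `‖c‖` is antitone in `τ`. If some `c(eₖ)` vanishes,
a multiple of any `n ∈ S ∖ {0}` dominates `eₖ` (as `τ(n) = 0` forces `n = 0` by unique
factorization), so `c` vanishes off `0`: this is `σ = ∞`. Otherwise comparing `a eⱼ` with `b eₖ`
for `b log pₖ ≤ a log pⱼ` shows that `σ = -log ‖c(eₖ)‖ / log pₖ` does not depend on `k`, and `c`
agrees with `n ↦ ∏ₖ c(eₖ)^{nₖ}` first on `ℕ^∞` by induction and then on `S`, as every `n` becomes
an element of `ℕ^∞` after adding one. The converse is Fubini for absolutely convergent double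
series, `z` being multiplicative and bounded by `1` on `S`.
-/

/-- `τ(n) = ∑ₖ nₖ · log pₖ`, where `pₖ` is the `k`-th prime. -/
noncomputable def tau (n : ℕ →₀ ℤ) : ℝ :=
  n.sum fun k m => (m : ℝ) * Real.log (Nat.nth Nat.Prime k)

/-- Membership in `ℓ¹(S)`, `S = {n ∈ ℤ^∞ : τ(n) ≥ 0}`: absolutely summable functions on
`ℤ^∞` supported on the positive cone `S`. -/
def MemL1S (f : (ℕ →₀ ℤ) → ℂ) : Prop :=
  Summable (fun n => ‖f n‖) ∧ ∀ n, tau n < 0 → f n = 0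

/-- Convolution product on `ℓ¹(S)`: `(f∗g)(n) = ∑_{m} f(m) g(n−m)`. -/
noncomputable def conv (f g : (ℕ →₀ ℤ) → ℂ) : (ℕ →₀ ℤ) → ℂ :=
  fun n => ∑' m : ℕ →₀ ℤ, f m * g (n - m)

/-- The character `n ↦ z^n = ∏ₖ (pₖ^{−σ} λₖ)^{nₖ}` attached to `σ ∈ [0,∞]` and `λ ∈ 𝕋^ω`
(for `σ = ∞`: `z^n = 0` for `n ≠ 0`, `z^0 = 1`). -/
noncomputable def charZ (σ : ENNReal) (lam : ℕ → Circle) (n : ℕ →₀ ℤ) : ℂ :=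
  if σ = ⊤ then (if n = 0 then 1 else 0)
  else ∏ k ∈ n.support,
    ((((Nat.nth Nat.Prime k : ℝ) ^ (-σ.toReal) : ℝ) : ℂ) * (lam k : ℂ)) ^ (n k)

lemma nth_prime_injective : Function.Injective (Nat.nth Nat.Prime) :=
  (Nat.nth_strictMono Nat.infinite_setOfPred_prime).injective

lemma one_lt_nth_prime (k : ℕ) : (1 : ℝ) < Nat.nth Nat.Prime k := by
  exact_mod_cast (Nat.prime_nth_prime k).one_lt

lemma log_nth_prime_pos (k : ℕ) : 0 < Real.log (Nat.nth Nat.Prime k) :=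
  Real.log_pos (one_lt_nth_prime k)

lemma prod_nth_prime_pow_injective :
    Function.Injective fun m : ℕ →₀ ℕ => m.prod fun k e => Nat.nth Nat.Prime k ^ e := by
  intro m m' h
  have key : ∀ m : ℕ →₀ ℕ, (m.prod fun k e => Nat.nth Nat.Prime k ^ e).factorization =
      m.mapDomain (Nat.nth Nat.Prime) := by
    intro m
    rw [← Finsupp.prod_mapDomain_index (f := Nat.nth Nat.Prime) (h := fun p e => p ^ e)
      (fun _ => pow_zero _) (fun _ _ _ => pow_add _ _ _)]
    refine Nat.prod_pow_factorization_eq_self fun p hp => ?_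
    obtain ⟨k, -, rfl⟩ := Finset.mem_image.1 (Finsupp.mapDomain_support hp)
    exact Nat.prime_nth_prime k
  exact Finsupp.mapDomain_injective nth_prime_injective
    (by simpa only [key] using congrArg Nat.factorization h)

lemma tau_add (n m : ℕ →₀ ℤ) : tau (n + m) = tau n + tau m :=
  Finsupp.sum_add_index' (fun _ => by simp) (fun _ _ _ => by push_cast; ring)

noncomputable def tauHom : (ℕ →₀ ℤ) →+ ℝ := AddMonoidHom.mk' tau tau_add

lemma tau_zero : tau 0 = 0 := map_zero tauHom

lemma tau_sub (n m : ℕ →₀ ℤ) : tau (n - m) = tau n - tau m := map_sub tauHom n m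

lemma tau_nsmul (M : ℕ) (n : ℕ →₀ ℤ) : tau (M • n) = M * tau n :=
  (map_nsmul tauHom M n).trans (nsmul_eq_mul _ _)

lemma tau_single_one (k : ℕ) : tau (Finsupp.single k 1) = Real.log (Nat.nth Nat.Prime k) :=
  (Finsupp.sum_single_index (by simp)).trans (by simp)

lemma tau_single_one_pos (k : ℕ) : 0 < tau (Finsupp.single k 1) :=
  tau_single_one k ▸ log_nth_prime_pos k

noncomputable abbrev natCastFinsupp : (ℕ →₀ ℕ) →+ (ℕ →₀ ℤ) :=
  Finsupp.mapRange.addMonoidHom (Nat.castAddMonoidHom ℤ)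

lemma tau_natCastFinsupp (m : ℕ →₀ ℕ) :
    tau (natCastFinsupp m) = m.sum fun k e => (e : ℝ) * Real.log (Nat.nth Nat.Prime k) :=
  Finsupp.sum_mapRange_index (hf := map_zero _) (by simp)

lemma tau_natCastFinsupp_nonneg (m : ℕ →₀ ℕ) : 0 ≤ tau (natCastFinsupp m) := by
  rw [tau_natCastFinsupp]
  exact Finsupp.sum_nonneg fun k _ => mul_nonneg (Nat.cast_nonneg _) (log_nth_prime_pos k).le

lemma exp_tau_natCastFinsupp (m : ℕ →₀ ℕ) :
    Real.exp (tau (natCastFinsupp m)) = ((m.prod fun k e => Nat.nth Nat.Prime k ^ e : ℕ) : ℝ) := by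
  rw [tau_natCastFinsupp, Nat.cast_finsuppProd, Finsupp.sum, Real.exp_sum, Finsupp.prod]
  refine Finset.prod_congr rfl fun k _ => ?_
  rw [Real.exp_nat_mul, Real.exp_log (zero_lt_one.trans (one_lt_nth_prime k)), Nat.cast_pow]

lemma add_natCastFinsupp_toNat_neg (n : ℕ →₀ ℤ) :
    n + natCastFinsupp ((-n).mapRange Int.toNat rfl) =
      natCastFinsupp (n.mapRange Int.toNat rfl) := by
  ext k
  simp only [Finsupp.coe_add, Pi.add_apply, Finsupp.mapRange.addMonoidHom_apply,
    Finsupp.mapRange_apply, Finsupp.coe_neg, Pi.neg_apply, Nat.coe_castAddMonoidHom]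
  omega

lemma eq_zero_of_tau_eq_zero {n : ℕ →₀ ℤ} (h : tau n = 0) : n = 0 := by
  have hn := add_natCastFinsupp_toNat_neg n
  have htau := congrArg tau hn
  rw [tau_add, h, zero_add] at htau
  have hexp := congrArg Real.exp htau
  rw [exp_tau_natCastFinsupp, exp_tau_natCastFinsupp, Nat.cast_inj] at hexp
  have hprod := prod_nth_prime_pow_injective hexp
  rwa [hprod, add_eq_right] at hn

lemma tau_pos {n : ℕ →₀ ℤ} (hn : 0 ≤ tau n) (hn0 : n ≠ 0) : 0 < tau n :=
  hn.lt_of_ne fun h => hn0 (eq_zero_of_tau_eq_zero h.symm)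

noncomputable def multiZPow (w : ℕ → ℂ) (n : ℕ →₀ ℤ) : ℂ :=
  n.prod fun k e => w k ^ e

lemma multiZPow_add {w : ℕ → ℂ} (hw : ∀ k, w k ≠ 0) (n m : ℕ →₀ ℤ) :
    multiZPow w (n + m) = multiZPow w n * multiZPow w m :=
  Finsupp.prod_add_index' (fun _ => zpow_zero _) (fun k _ _ => zpow_add₀ (hw k) _ _)

lemma multiZPow_ne_zero {w : ℕ → ℂ} (hw : ∀ k, w k ≠ 0) (n : ℕ →₀ ℤ) : multiZPow w n ≠ 0 :=
  Finsupp.prod_ne_zero_iff.2 fun k _ => zpow_ne_zero _ (hw k)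

lemma multiZPow_nsmul_single (w : ℕ → ℂ) (k e : ℕ) :
    multiZPow w (e • Finsupp.single k 1) = w k ^ e := by
  rw [Finsupp.smul_single, nsmul_one, multiZPow, Finsupp.prod_single_index (zpow_zero _),
    zpow_natCast]

lemma norm_multiZPow {w : ℕ → ℂ} {s : ℝ} (hw : ∀ k, ‖w k‖ = (Nat.nth Nat.Prime k : ℝ) ^ (-s))
    (n : ℕ →₀ ℤ) : ‖multiZPow w n‖ = Real.exp (-s * tau n) := by
  rw [multiZPow, Finsupp.prod, norm_prod, tau, Finsupp.sum, Finset.mul_sum, Real.exp_sum]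
  refine Finset.prod_congr rfl fun k _ => ?_
  have hp := zero_lt_one.trans (one_lt_nth_prime k)
  rw [norm_zpow, hw, ← Real.rpow_intCast, ← Real.rpow_mul hp.le, Real.rpow_def_of_pos hp]
  ring_nf

noncomputable def charBase (σ : ENNReal) (lam : ℕ → Circle) (k : ℕ) : ℂ :=
  (((Nat.nth Nat.Prime k : ℝ) ^ (-σ.toReal) : ℝ) : ℂ) * (lam k : ℂ)

lemma norm_charBase (σ : ENNReal) (lam : ℕ → Circle) (k : ℕ) :
    ‖charBase σ lam k‖ = (Nat.nth Nat.Prime k : ℝ) ^ (-σ.toReal) := by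
  rw [charBase, norm_mul, Circle.norm_coe, mul_one, Complex.norm_real, Real.norm_eq_abs,
    abs_of_pos (Real.rpow_pos_of_pos (zero_lt_one.trans (one_lt_nth_prime k)) _)]

lemma charBase_ne_zero (σ : ENNReal) (lam : ℕ → Circle) (k : ℕ) : charBase σ lam k ≠ 0 := by
  rw [← norm_ne_zero_iff, norm_charBase]
  exact (Real.rpow_pos_of_pos (zero_lt_one.trans (one_lt_nth_prime k)) _).ne'

lemma charZ_top (lam : ℕ → Circle) (n : ℕ →₀ ℤ) : charZ ⊤ lam n = if n = 0 then 1 else 0 :=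
  if_pos rfl

lemma charZ_of_ne_top {σ : ENNReal} (hσ : σ ≠ ⊤) (lam : ℕ → Circle) (n : ℕ →₀ ℤ) :
    charZ σ lam n = multiZPow (charBase σ lam) n :=
  if_neg hσ

lemma charZ_add (σ : ENNReal) (lam : ℕ → Circle) {m u : ℕ →₀ ℤ} (hm : 0 ≤ tau m) (hu : 0 ≤ tau u) :
    charZ σ lam (m + u) = charZ σ lam m * charZ σ lam u := by
  by_cases hσ : σ = ⊤
  · subst hσ
    simp only [charZ_top]
    by_cases hm0 : m = 0
    · simp [hm0]
    by_cases hu0 : u = 0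
    · simp [hu0]
    have hmu : m + u ≠ 0 := by
      intro h
      have := tau_add m u
      rw [h, tau_zero] at this
      linarith [tau_pos hm hm0]
    simp [hm0, hu0, hmu]
  · simp only [charZ_of_ne_top hσ, multiZPow_add (charBase_ne_zero σ lam)]

lemma norm_charZ_le_one (σ : ENNReal) (lam : ℕ → Circle) {n : ℕ →₀ ℤ} (hn : 0 ≤ tau n) :
    ‖charZ σ lam n‖ ≤ 1 := by
  by_cases hσ : σ = ⊤
  · subst hσ
    rw [charZ_top]
    split_ifs <;> simp
  · rw [charZ_of_ne_top hσ, norm_multiZPow (norm_charBase σ lam), Real.exp_le_one_iff]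
    exact mul_nonpos_of_nonpos_of_nonneg (neg_nonpos.2 ENNReal.toReal_nonneg) hn

lemma exists_charZ_eq_multiZPow {z : ℕ → ℂ} {s : ℝ} (hs : 0 ≤ s)
    (hz : ∀ k, ‖z k‖ = (Nat.nth Nat.Prime k : ℝ) ^ (-s)) :
    ∃ (σ : ENNReal) (lam : ℕ → Circle), ∀ n, charZ σ lam n = multiZPow z n := by
  refine ⟨ENNReal.ofReal s, fun k => Circle.exp (z k).arg, fun n => ?_⟩
  have hbase : charBase (ENNReal.ofReal s) (fun k => Circle.exp (z k).arg) = z := by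
    funext k
    rw [charBase, ENNReal.toReal_ofReal hs, Circle.coe_exp, ← hz, Complex.norm_mul_exp_arg_mul_I]
  rw [charZ_of_ne_top ENNReal.ofReal_ne_top, hbase]

lemma div_le_div_of_forall_nat_mul_le {x y u v : ℝ} (hx : 0 < x) (hy : 0 < y) (hv : 0 ≤ v)
    (h : ∀ a b : ℕ, b * y ≤ a * x → b * v ≤ a * u) : v / y ≤ u / x := by
  rw [div_le_div_iff₀ hy hx]
  by_contra! hlt
  obtain ⟨a, ha⟩ := exists_nat_gt (v * y / (v * x - u * y))
  have hax : 0 ≤ a * x / y := by positivity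
  have hb : (⌊a * x / y⌋₊ : ℝ) * y ≤ a * x := (le_div_iff₀ hy).1 (Nat.floor_le hax)
  have hb' : a * x < (⌊a * x / y⌋₊ + 1) * y := (div_lt_iff₀ hy).1 (Nat.lt_floor_add_one _)
  have h1 := mul_le_mul_of_nonneg_right hb'.le hv
  have h2 := mul_le_mul_of_nonneg_right (h a _ hb) hy.le
  have h3 := (div_lt_iff₀ (sub_pos.2 hlt)).1 ha
  nlinarith

section BoundedCharacter

variable {c : (ℕ →₀ ℤ) → ℂ}
  (hbound : ∀ n, 0 ≤ tau n → ‖c n‖ ≤ 1)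
  (hmul : ∀ n m, 0 ≤ tau n → 0 ≤ tau m → c (n + m) = c n * c m)
  (hone : c 0 = 1)

include hmul hone in
lemma apply_nsmul_of_mul {n : ℕ →₀ ℤ} (hn : 0 ≤ tau n) (M : ℕ) : c (M • n) = c n ^ M := by
  induction M with
  | zero => simpa using hone
  | succ M ih =>
    rw [succ_nsmul, hmul _ _ (by rw [tau_nsmul]; positivity) hn, ih, pow_succ]

include hbound hmul in
lemma norm_le_norm_of_tau_le {n m : ℕ →₀ ℤ} (hm : 0 ≤ tau m) (hmn : tau m ≤ tau n) :
    ‖c n‖ ≤ ‖c m‖ := by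
  have hsub : 0 ≤ tau (n - m) := by rw [tau_sub]; linarith
  calc ‖c n‖ = ‖c (n - m)‖ * ‖c m‖ := by rw [← norm_mul, ← hmul _ _ hsub hm, sub_add_cancel]
    _ ≤ 1 * ‖c m‖ := by gcongr; exact hbound _ hsub
    _ = ‖c m‖ := one_mul _

include hbound hmul hone in
/-- A large multiple of `n` dominates `eₖ`. -/
lemma eq_zero_of_apply_single_eq_zero {k : ℕ} (hk : c (Finsupp.single k 1) = 0)
    {n : ℕ →₀ ℤ} (hn : 0 < tau n) : c n = 0 := by
  obtain ⟨M, hM⟩ := exists_nat_ge (Real.log (Nat.nth Nat.Prime k) / tau n)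
  have hle : tau (Finsupp.single k 1) ≤ tau (M • n) := by
    rw [tau_single_one, tau_nsmul]; exact (div_le_iff₀ hn).1 hM
  have hM0 : M ≠ 0 := by
    rintro rfl
    rw [zero_smul, tau_zero, tau_single_one] at hle
    exact (log_nth_prime_pos k).not_ge hle
  have := norm_le_norm_of_tau_le hbound hmul (tau_single_one_pos k).le hle
  rw [hk, norm_zero, apply_nsmul_of_mul hmul hone hn.le, norm_pow] at this
  exact norm_eq_zero.1 (pow_eq_zero_iff hM0 |>.1 (le_antisymm this (by positivity)))

include hbound hmul hone in
/-- Comparing `c(a eⱼ)` with `c(b eₖ)` whenever `b log pₖ ≤ a log pⱼ` forces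
`-log ‖c(eₖ)‖ / log pₖ` to be independent of `k`. -/
lemma exists_norm_apply_single_eq_rpow (hz : ∀ k, c (Finsupp.single k 1) ≠ 0) :
    ∃ s : ℝ, 0 ≤ s ∧ ∀ k, ‖c (Finsupp.single k 1)‖ = (Nat.nth Nat.Prime k : ℝ) ^ (-s) := by
  set u : ℕ → ℝ := fun k => -Real.log ‖c (Finsupp.single k 1)‖ with hu
  have hsingle_nonneg : ∀ k, 0 ≤ tau (Finsupp.single k 1) := fun k => (tau_single_one_pos k).le
  have hu_nonneg : ∀ k, 0 ≤ u k := fun k =>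
    neg_nonneg.2 (Real.log_nonpos (norm_nonneg _) (hbound _ (hsingle_nonneg k)))
  have hcompare : ∀ j k a b : ℕ,
      b * Real.log (Nat.nth Nat.Prime k) ≤ a * Real.log (Nat.nth Nat.Prime j) →
      b * u k ≤ a * u j := by
    intro j k a b hab
    have hle := norm_le_norm_of_tau_le hbound hmul (n := a • Finsupp.single j 1)
      (by rw [tau_nsmul]; exact mul_nonneg (Nat.cast_nonneg b) (hsingle_nonneg k))
      (by rwa [tau_nsmul, tau_nsmul, tau_single_one, tau_single_one])
    rw [apply_nsmul_of_mul hmul hone (hsingle_nonneg j), apply_nsmul_of_mul hmul hone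
      (hsingle_nonneg k), norm_pow, norm_pow] at hle
    have := Real.log_le_log (pow_pos (norm_pos_iff.2 (hz j)) a) hle
    rw [Real.log_pow, Real.log_pow] at this
    simp only [hu]
    linarith
  have hratio : ∀ j k,
      u k / Real.log (Nat.nth Nat.Prime k) ≤ u j / Real.log (Nat.nth Nat.Prime j) :=
    fun j k => div_le_div_of_forall_nat_mul_le (log_nth_prime_pos j) (log_nth_prime_pos k)
      (hu_nonneg k) (hcompare j k)
  refine ⟨u 0 / Real.log (Nat.nth Nat.Prime 0),
    div_nonneg (hu_nonneg 0) (log_nth_prime_pos 0).le, fun k => ?_⟩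
  have hk : u k = u 0 / Real.log (Nat.nth Nat.Prime 0) * Real.log (Nat.nth Nat.Prime k) := by
    rw [← le_antisymm (hratio 0 k) (hratio k 0), div_mul_cancel₀ _ (log_nth_prime_pos k).ne']
  rw [Real.rpow_def_of_pos (zero_lt_one.trans (one_lt_nth_prime k)), mul_neg, mul_comm, ← hk, hu,
    neg_neg, Real.exp_log (norm_pos_iff.2 (hz k))]

include hmul hone in
lemma apply_natCastFinsupp_eq_multiZPow (hz : ∀ k, c (Finsupp.single k 1) ≠ 0) (m : ℕ →₀ ℕ) :
    c (natCastFinsupp m) = multiZPow (fun k => c (Finsupp.single k 1)) (natCastFinsupp m) := by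
  induction m using Finsupp.induction with
  | zero => rw [map_zero, hone, multiZPow, Finsupp.prod_zero_index]
  | single_add k e m _ _ ih =>
    have hsingle : natCastFinsupp (Finsupp.single k e) = e • Finsupp.single k 1 := by
      simp [Finsupp.smul_single]
    rw [map_add, hmul _ _ (tau_natCastFinsupp_nonneg _) (tau_natCastFinsupp_nonneg _), ih,
      multiZPow_add hz, hsingle, multiZPow_nsmul_single,
      apply_nsmul_of_mul hmul hone (tau_single_one_pos k).le]

include hmul hone in
lemma apply_eq_multiZPow (hz : ∀ k, c (Finsupp.single k 1) ≠ 0) {n : ℕ →₀ ℤ} (hn : 0 ≤ tau n) :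
    c n = multiZPow (fun k => c (Finsupp.single k 1)) n := by
  have hsplit := add_natCastFinsupp_toNat_neg n
  have h := apply_natCastFinsupp_eq_multiZPow hmul hone hz (n.mapRange Int.toNat rfl)
  rw [← hsplit, hmul _ _ hn (tau_natCastFinsupp_nonneg _), multiZPow_add hz,
    apply_natCastFinsupp_eq_multiZPow hmul hone hz] at h
  exact mul_right_cancel₀ (multiZPow_ne_zero hz _) h

end BoundedCharacter

theorem exists_charZ_of_bounded_mul (c : (ℕ →₀ ℤ) → ℂ)
    (hbound : ∀ n, 0 ≤ tau n → ‖c n‖ ≤ 1)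
    (hmul : ∀ n m, 0 ≤ tau n → 0 ≤ tau m → c (n + m) = c n * c m)
    (hne : ∃ n, 0 ≤ tau n ∧ c n ≠ 0) :
    ∃ (σ : ENNReal) (lam : ℕ → Circle), ∀ n, 0 ≤ tau n → c n = charZ σ lam n := by
  obtain ⟨n₀, hn₀, hc₀⟩ := hne
  have hone : c 0 = 1 :=
    mul_left_cancel₀ hc₀ (by rw [← hmul n₀ 0 hn₀ tau_zero.ge, add_zero, mul_one])
  by_cases hz : ∃ k, c (Finsupp.single k 1) = 0
  · obtain ⟨k, hk⟩ := hz
    refine ⟨⊤, 1, fun n hn => ?_⟩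
    rw [charZ_top]
    split_ifs with hn0
    · rw [hn0, hone]
    · exact eq_zero_of_apply_single_eq_zero hbound hmul hone hk (tau_pos hn hn0)
  · push Not at hz
    obtain ⟨s, hs, hnorm⟩ := exists_norm_apply_single_eq_rpow hbound hmul hone hz
    obtain ⟨σ, lam, hσ⟩ := exists_charZ_eq_multiZPow hs hnorm
    exact ⟨σ, lam, fun n hn => (apply_eq_multiZPow hmul hone hz hn).trans (hσ n).symm⟩

def antidiagonalEquiv (G : Type*) [AddCommGroup G] : G × G ≃ G × G where
  toFun q := (q.2, q.1 - q.2)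
  invFun p := (p.1 + p.2, p.1)
  left_inv q := by simp
  right_inv p := by simp

section Convolution

variable {G R : Type*} [AddCommGroup G] [NormedRing R] {f g : G → R}

lemma summable_norm_mul_sub (hf : Summable fun n => ‖f n‖) (hg : Summable fun n => ‖g n‖) :
    Summable fun q : G × G => ‖f q.2 * g (q.1 - q.2)‖ := by
  have h := (antidiagonalEquiv G).summable_iff.2 (hf.mul_norm hg)
  exact h

lemma summable_norm_tsum_mul_sub (hf : Summable fun n => ‖f n‖) (hg : Summable fun n => ‖g n‖) :
    Summable fun n => ‖∑' m, f m * g (n - m)‖ :=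
  have h := summable_norm_mul_sub hf hg
  h.prod.of_nonneg_of_le (fun _ => norm_nonneg _)
    fun n => norm_tsum_le_tsum_norm (h.prod_factor n)

lemma tsum_tsum_mul_sub [CompleteSpace R] (hf : Summable fun n => ‖f n‖)
    (hg : Summable fun n => ‖g n‖) :
    ∑' n, ∑' m, f m * g (n - m) = (∑' m, f m) * ∑' m, g m := by
  rw [tsum_mul_tsum_of_summable_norm hf hg, ← (antidiagonalEquiv G).tsum_eq]
  exact ((summable_norm_mul_sub hf hg).of_norm.tsum_prod).symm

end Convolution

lemma MemL1S.mono {f g : (ℕ →₀ ℤ) → ℂ} (hf : MemL1S f) (h : ∀ n, ‖g n‖ ≤ ‖f n‖) : MemL1S g :=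
  ⟨hf.1.of_nonneg_of_le (fun _ => norm_nonneg _) h,
    fun n hn => norm_le_zero_iff.1 (by simpa [hf.2 n hn] using h n)⟩

lemma memL1S_zero : MemL1S 0 :=
  ⟨by simp [summable_zero], fun _ _ => rfl⟩

lemma MemL1S.mul_eq_mul {f a b : (ℕ →₀ ℤ) → ℂ} (hf : MemL1S f)
    (h : ∀ n, 0 ≤ tau n → a n = b n) (n : ℕ →₀ ℤ) : f n * a n = f n * b n := by
  rcases le_or_gt 0 (tau n) with hn | hn
  · rw [h n hn]
  · rw [hf.2 n hn, zero_mul, zero_mul]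

lemma MemL1S.conv {f g : (ℕ →₀ ℤ) → ℂ} (hf : MemL1S f) (hg : MemL1S g) : MemL1S (conv f g) := by
  refine ⟨summable_norm_tsum_mul_sub hf.1 hg.1, fun n hn => ?_⟩
  have hterm : ∀ m, f m * g (n - m) = 0 := by
    intro m
    rcases lt_or_ge (tau m) 0 with hm | hm
    · rw [hf.2 m hm, zero_mul]
    · rw [hg.2 (n - m) (by rw [tau_sub]; linarith), mul_zero]
  simp only [_root_.conv, hterm, tsum_zero]

lemma MemL1S.mul_charZ {f : (ℕ →₀ ℤ) → ℂ} (hf : MemL1S f) (σ : ENNReal) (lam : ℕ → Circle) :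
    MemL1S fun n => f n * charZ σ lam n :=
  hf.mono fun n => by
    rw [norm_mul]
    rcases lt_or_ge (tau n) 0 with hn | hn
    · simp [hf.2 n hn]
    · exact mul_le_of_le_one_right (norm_nonneg _) (norm_charZ_le_one σ lam hn)

/-- `charZ` is multiplicative on `S`, which contains the supports of `f` and `g`. -/
lemma conv_mul_charZ {f g : (ℕ →₀ ℤ) → ℂ} (hf : MemL1S f) (hg : MemL1S g) (σ : ENNReal)
    (lam : ℕ → Circle) (n : ℕ →₀ ℤ) :
    conv f g n * charZ σ lam n =
      ∑' m, (f m * charZ σ lam m) * (g (n - m) * charZ σ lam (n - m)) := by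
  rw [_root_.conv, ← tsum_mul_right]
  refine tsum_congr fun m => ?_
  rcases lt_or_ge (tau m) 0 with hm | hm
  · simp [hf.2 m hm]
  rcases lt_or_ge (tau (n - m)) 0 with hnm | hnm
  · simp [hg.2 _ hnm]
  rw [show charZ σ lam n = charZ σ lam m * charZ σ lam (n - m) by
    rw [← charZ_add σ lam hm hnm, add_sub_cancel]]
  ring

lemma tsum_conv_mul_charZ {f g : (ℕ →₀ ℤ) → ℂ} (hf : MemL1S f) (hg : MemL1S g) (σ : ENNReal)
    (lam : ℕ → Circle) :
    ∑' n, conv f g n * charZ σ lam n =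
      (∑' n, f n * charZ σ lam n) * ∑' n, g n * charZ σ lam n := by
  simp only [conv_mul_charZ hf hg]
  exact tsum_tsum_mul_sub (hf.mul_charZ σ lam).1 (hg.mul_charZ σ lam).1

lemma memL1S_single_one {n : ℕ →₀ ℤ} (hn : 0 ≤ tau n) : MemL1S (Pi.single n 1) := by
  refine ⟨summable_of_ne_finset_zero (s := {n}) fun m hm => ?_, fun m hm => ?_⟩
  · rw [Pi.single_eq_of_ne (by simpa using hm), norm_zero]
  · exact Pi.single_eq_of_ne (by rintro rfl; linarith) _

lemma tsum_norm_single_one (n : ℕ →₀ ℤ) : ∑' m, ‖(Pi.single n 1 : (ℕ →₀ ℤ) → ℂ) m‖ = 1 := by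
  rw [tsum_eq_single n fun m hm => by rw [Pi.single_eq_of_ne hm, norm_zero], Pi.single_eq_same,
    norm_one]

lemma conv_single_one (n m : ℕ →₀ ℤ) :
    conv (Pi.single n 1) (Pi.single m 1) = Pi.single (n + m) 1 := by
  funext x
  rw [conv, tsum_eq_single n fun y hy => by rw [Pi.single_eq_of_ne hy, zero_mul],
    Pi.single_eq_same, one_mul]
  simp only [Pi.single_apply, sub_eq_iff_eq_add']

section LinearFunctional

variable {φ : ((ℕ →₀ ℤ) → ℂ) → ℂ}
  (hadd : ∀ f g, MemL1S f → MemL1S g → φ (f + g) = φ f + φ g)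
  (hsmul : ∀ (c : ℂ) (f), MemL1S f → φ (c • f) = c * φ f)
  (hbdd : ∀ f, MemL1S f → ‖φ f‖ ≤ ∑' n, ‖f n‖)

include hsmul in
lemma apply_zero_of_smul : φ 0 = 0 := by
  simpa using hsmul 0 0 memL1S_zero

include hsmul in
lemma apply_single_apply {f : (ℕ →₀ ℤ) → ℂ} (hf : MemL1S f) (m : ℕ →₀ ℤ) :
    φ (Pi.single m (f m)) = f m * φ (Pi.single m 1) := by
  rcases le_or_gt 0 (tau m) with hm | hm
  · rw [← hsmul _ _ (memL1S_single_one hm), ← Pi.single_smul', smul_eq_mul, mul_one]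
  · rw [hf.2 m hm, Pi.single_zero, apply_zero_of_smul hsmul, zero_mul]

include hadd hsmul in
lemma apply_indicator {f : (ℕ →₀ ℤ) → ℂ} (hf : MemL1S f) (F : Finset (ℕ →₀ ℤ)) :
    φ ((F : Set (ℕ →₀ ℤ)).indicator f) = ∑ m ∈ F, f m * φ (Pi.single m 1) := by
  induction F using Finset.induction_on with
  | empty =>
    rw [Finset.coe_empty, Set.indicator_empty', Finset.sum_empty, apply_zero_of_smul hsmul]
  | insert a F ha ih =>
    have hsplit : ((insert a F : Finset _) : Set (ℕ →₀ ℤ)).indicator f =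
        Pi.single a (f a) + (F : Set (ℕ →₀ ℤ)).indicator f := by
      rw [Finset.coe_insert, Set.insert_eq, Set.indicator_union_of_disjoint
        (Set.disjoint_singleton_left.2 ha), Set.indicator_singleton]
      rfl
    rw [hsplit, hadd _ _ (hf.mono fun n => ?_) (hf.mono fun n => ?_), ih,
      apply_single_apply hsmul hf, Finset.sum_insert ha]
    · rw [Pi.single_apply]; split_ifs with h <;> simp [h]
    · exact norm_indicator_le_norm_self f n

include hadd hsmul hbdd in
/-- The error of truncating to `F` is `φ` of the tail `1_{Fᶜ} f`, of norm at most
`∑_{n ∉ F} ‖f n‖ → 0`. -/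
lemma hasSum_apply_single {f : (ℕ →₀ ℤ) → ℂ} (hf : MemL1S f) :
    HasSum (fun n => f n * φ (Pi.single n 1)) (φ f) := by
  rw [HasSum, tendsto_iff_norm_sub_tendsto_zero]
  refine squeeze_zero (fun _ => norm_nonneg _) (fun F => ?_)
    (tendsto_tsum_compl_atTop_zero fun n => ‖f n‖)
  have htail : MemL1S ((F : Set (ℕ →₀ ℤ))ᶜ.indicator f) :=
    hf.mono fun n => norm_indicator_le_norm_self f n
  have hsplit :
      φ f = φ ((F : Set (ℕ →₀ ℤ)).indicator f) + φ ((F : Set (ℕ →₀ ℤ))ᶜ.indicator f) := by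
    conv_lhs => rw [← Set.indicator_self_add_compl (F : Set (ℕ →₀ ℤ)) f]
    exact hadd _ _ (hf.mono fun n => norm_indicator_le_norm_self f n) htail
  rw [← apply_indicator hadd hsmul hf F, hsplit, sub_add_cancel_left, norm_neg]
  refine (hbdd _ htail).trans_eq ?_
  simp_rw [norm_indicator_eq_indicator_norm, ← tsum_subtype]
  rfl

end LinearFunctional

/-- Every (bounded, nonzero) multiplicative linear functional on the convolution Banach
algebra `ℓ¹(S)` is of the form `f ↦ ∑_{n∈S} f(n) z^n` with `z^n = ∏ₖ (pₖ^{−σ}λₖ)^{nₖ}` for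
some `σ ∈ [0,∞]`, `λ ∈ 𝕋^ω`; and conversely each such formula is multiplicative. -/
theorem characters_of_l1_semigroup :
    (∀ φ : ((ℕ →₀ ℤ) → ℂ) → ℂ,
      (∀ f g, MemL1S f → MemL1S g → φ (f + g) = φ f + φ g) →
      (∀ (c : ℂ) (f), MemL1S f → φ (c • f) = c * φ f) →
      (∀ f, MemL1S f → ‖φ f‖ ≤ ∑' n, ‖f n‖) →
      (∀ f g, MemL1S f → MemL1S g → φ (conv f g) = φ f * φ g) →
      (∃ f, MemL1S f ∧ φ f ≠ 0) →
      ∃ (σ : ENNReal) (lam : ℕ → Circle), ∀ f, MemL1S f →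
        φ f = ∑' n, f n * charZ σ lam n) ∧
    (∀ (σ : ENNReal) (lam : ℕ → Circle) (f g : (ℕ →₀ ℤ) → ℂ),
      MemL1S f → MemL1S g →
      MemL1S (conv f g) ∧
        (∑' n, conv f g n * charZ σ lam n) =
          (∑' n, f n * charZ σ lam n) * (∑' n, g n * charZ σ lam n)) := by
  refine ⟨fun φ hadd hsmul hbdd hmul ⟨f₀, hf₀, hφf₀⟩ => ?_, fun σ lam f g hf hg =>
    ⟨hf.conv hg, tsum_conv_mul_charZ hf hg σ lam⟩⟩
  have hsum : ∀ f, MemL1S f → HasSum (fun n => f n * φ (Pi.single n 1)) (φ f) :=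
    fun f hf => hasSum_apply_single hadd hsmul hbdd hf
  have hne : ∃ n, 0 ≤ tau n ∧ φ (Pi.single n 1) ≠ 0 := by
    by_contra! hzero
    refine hφf₀ ((hsum f₀ hf₀).unique ?_)
    simpa only [hf₀.mul_eq_mul hzero, mul_zero] using hasSum_zero
  obtain ⟨σ, lam, hchar⟩ := exists_charZ_of_bounded_mul (fun n => φ (Pi.single n 1))
    (fun n hn => (hbdd _ (memL1S_single_one hn)).trans_eq (tsum_norm_single_one n))
    (fun n m hn hm => by
      rw [← conv_single_one, hmul _ _ (memL1S_single_one hn) (memL1S_single_one hm)])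
    hne
  exact ⟨σ, lam, fun f hf => (hsum f hf).tsum_eq.symm.trans (tsum_congr (hf.mul_eq_mul hchar))⟩
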